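/- Sufficiency of the KKT conditions: let w ∈ ℝ^p and θ ∈ [0,1]^n satisfy w = (1/α)·S_β((1/n)·X̄θ) and, for every i ∈ {1, …, n}: [θ]_i = 0 whenever 1 − ⟨x̄ᵢ, w⟩ < 0, [θ]_i = 1 whenever 1 − ⟨x̄ᵢ, w⟩ > γ, and [θ]_i = (1/γ)·(1 − ⟨x̄ᵢ, w⟩) whenever 0 ≤ 1 − ⟨x̄ᵢ, w⟩ ≤ γ. Then w minimizes P(·; α, β) over ℝ^p and θ minimizes D(·; α, β) over the box [0,1]^n. -/

import Mathlib

open Finset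

/-- The smoothed hinge loss. -/
noncomputable def ell (γ t : ℝ) : ℝ :=
  if t < 0 then 0 else if t ≤ γ then t ^ 2 / (2 * γ) else t - γ / 2

/-- Componentwise soft-thresholding operator. -/
noncomputable def softThresh (β u : ℝ) : ℝ :=
  Real.sign u * max (|u| - β) 0

/-- Primal objective P(w; α, β). -/
noncomputable def Pobj {n p : ℕ} (xb : Fin n → Fin p → ℝ) (γ α β : ℝ) (w : Fin p → ℝ) : ℝ :=
  (1 / (n : ℝ)) * ∑ i, ell γ (1 - ∑ j, xb i j * w j)
    + (α / 2) * ∑ j, w j ^ 2 + β * ∑ j, |w j|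

/-- Dual objective D(θ; α, β). -/
noncomputable def Dobj {n p : ℕ} (xb : Fin n → Fin p → ℝ) (γ α β : ℝ) (θ : Fin n → ℝ) : ℝ :=
  (1 / (2 * α)) * ∑ j, softThresh β ((1 / (n : ℝ)) * ∑ i, θ i * xb i j) ^ 2
    + (γ / (2 * (n : ℝ))) * ∑ i, θ i ^ 2 - (1 / (n : ℝ)) * ∑ i, θ i

lemma softThresh_sq (β u : ℝ) (hβ : 0 ≤ β) :
    softThresh β u ^ 2 = max (|u| - β) 0 ^ 2 := by
  unfold softThresh
  rcases lt_trichotomy u 0 with h | h | h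
  · rw [Real.sign_of_neg h]; ring
  · subst h
    rw [Real.sign_zero, abs_zero, zero_sub, max_eq_right (by linarith : -β ≤ 0)]
    ring
  · rw [Real.sign_of_pos h]; ring

lemma fy_reg (α β v w : ℝ) (hα : 0 < α) (hβ : 0 ≤ β) :
    v * w ≤ α / 2 * w ^ 2 + β * |w| + 1 / (2 * α) * softThresh β v ^ 2 := by
  rw [softThresh_sq β v hβ]
  set m : ℝ := max (|v| - β) 0 with hm
  have hm0 : 0 ≤ m := le_max_right _ _
  have hv : |v| ≤ m + β := by
    have := le_max_left (|v| - β) 0; linarith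
  have hvw : v * w ≤ |v| * |w| :=
    (le_abs_self (v * w)).trans_eq (abs_mul v w)
  have h1 : 2 * α * (m * |w|) ≤ 2 * α * (α / 2 * w ^ 2 + 1 / (2 * α) * m ^ 2) := by
    have hexp : 2 * α * (α / 2 * w ^ 2 + 1 / (2 * α) * m ^ 2) = α ^ 2 * |w| ^ 2 + m ^ 2 := by
      rw [← sq_abs w]; field_simp
    rw [hexp]
    nlinarith [sq_nonneg (α * |w| - m)]
  have h1' : m * |w| ≤ α / 2 * w ^ 2 + 1 / (2 * α) * m ^ 2 :=
    le_of_mul_le_mul_left h1 (by linarith)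
  have h2 : |v| * |w| ≤ (m + β) * |w| :=
    mul_le_mul_of_nonneg_right hv (abs_nonneg w)
  have h3 : (m + β) * |w| = m * |w| + β * |w| := by ring
  linarith

lemma fy_reg_eq (α β v w : ℝ) (hα : 0 < α) (hβ : 0 ≤ β)
    (hw : w = 1 / α * softThresh β v) :
    v * w = α / 2 * w ^ 2 + β * |w| + 1 / (2 * α) * softThresh β v ^ 2 := by
  subst hw
  unfold softThresh
  rcases le_or_gt |v| β with h | h
  · rw [max_eq_right (by linarith)]
    simp
  · rw [max_eq_left (by linarith)]
    rcases lt_trichotomy v 0 with hv | hv | hv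
    · rw [Real.sign_of_neg hv, abs_of_neg hv]
      have hvβ : v + β < 0 := by
        rw [abs_of_neg hv] at h; linarith
      rw [show -1 * (-v - β) = v + β by ring,
        abs_of_neg (by
          have : 0 < 1 / α := by positivity
          nlinarith : 1 / α * (v + β) < 0)]
      field_simp
      ring
    · exfalso; rw [hv] at h; simp at h; linarith
    · rw [Real.sign_of_pos hv, abs_of_pos hv]
      have hvβ : 0 < v - β := by linarith [abs_of_pos hv ▸ h]
      rw [show (1:ℝ) * (v - β) = v - β by ring,
        abs_of_pos (by positivity : 0 < 1 / α * (v - β))]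
      field_simp
      ring

lemma fy_loss (γ t s : ℝ) (hγ : 0 < γ) (hs0 : 0 ≤ s) (hs1 : s ≤ 1) :
    s * t ≤ ell γ t + γ * s ^ 2 / 2 := by
  unfold ell
  split_ifs with h1 h2
  · nlinarith [mul_nonpos_of_nonneg_of_nonpos hs0 h1.le,
      mul_nonneg (mul_nonneg hγ.le hs0) hs0]
  · push_neg at h1
    have hexp : 2 * γ * (t ^ 2 / (2 * γ) + γ * s ^ 2 / 2) = t ^ 2 + γ ^ 2 * s ^ 2 := by
      field_simp
    nlinarith [sq_nonneg (t - γ * s), hγ]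
  · push_neg at h1 h2
    have inner : 0 ≤ t - γ * (1 + s) / 2 := by nlinarith [mul_nonneg hγ.le (by linarith : (0:ℝ) ≤ 1 - s)]
    nlinarith [mul_nonneg (by linarith : (0:ℝ) ≤ 1 - s) inner]

lemma fy_loss_eq (γ t θ : ℝ) (hγ : 0 < γ)
    (h1 : t < 0 → θ = 0) (h2 : t > γ → θ = 1)
    (h3 : 0 ≤ t → t ≤ γ → θ = 1 / γ * t) :
    ell γ t + γ * θ ^ 2 / 2 - θ * t = 0 := by
  unfold ell
  split_ifs with ht1 ht2
  · rw [h1 ht1]; ring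
  · push_neg at ht1
    rw [h3 ht1 ht2]; field_simp; ring
  · push_neg at ht2
    rw [h2 ht2]; ring

lemma gap_eq {n p : ℕ} (xb : Fin n → Fin p → ℝ) (γ α β : ℝ)
    (w : Fin p → ℝ) (θ : Fin n → ℝ) :
    Pobj xb γ α β w + Dobj xb γ α β θ =
      (1 / (n : ℝ)) * ∑ i, (ell γ (1 - ∑ j, xb i j * w j) + γ * θ i ^ 2 / 2
        - θ i * (1 - ∑ j, xb i j * w j))
      + ∑ j, (α / 2 * w j ^ 2 + β * |w j|
        + 1 / (2 * α) * softThresh β ((1 / (n : ℝ)) * ∑ i, θ i * xb i j) ^ 2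
        - ((1 / (n : ℝ)) * ∑ i, θ i * xb i j) * w j) := by
  have swap : ∑ j, ((1 / (n : ℝ)) * ∑ i, θ i * xb i j) * w j
      = (1 / (n : ℝ)) * ∑ i, θ i * ∑ j, xb i j * w j := by
    simp_rw [Finset.mul_sum, Finset.sum_mul]
    rw [Finset.sum_comm]
    exact Finset.sum_congr rfl fun i _ => Finset.sum_congr rfl fun j _ => by ring
  have e1 : ∑ i, (ell γ (1 - ∑ j, xb i j * w j) + γ * θ i ^ 2 / 2
        - θ i * (1 - ∑ j, xb i j * w j))
      = (∑ i, ell γ (1 - ∑ j, xb i j * w j)) + (γ / 2) * (∑ i, θ i ^ 2)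
        - (∑ i, θ i) + ∑ i, θ i * ∑ j, xb i j * w j := by
    rw [Finset.sum_sub_distrib, Finset.sum_add_distrib, Finset.mul_sum]
    have eA : ∑ i, γ * θ i ^ 2 / 2 = ∑ i, γ / 2 * θ i ^ 2 :=
      Finset.sum_congr rfl fun i _ => by ring
    have eB : ∑ i, θ i * (1 - ∑ j, xb i j * w j)
        = (∑ i, θ i) - ∑ i, θ i * ∑ j, xb i j * w j := by
      rw [← Finset.sum_sub_distrib]
      exact Finset.sum_congr rfl fun i _ => by ring
    rw [eA, eB]; ring
  have e2 : ∑ j, (α / 2 * w j ^ 2 + β * |w j|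
        + 1 / (2 * α) * softThresh β ((1 / (n : ℝ)) * ∑ i, θ i * xb i j) ^ 2
        - ((1 / (n : ℝ)) * ∑ i, θ i * xb i j) * w j)
      = (α / 2) * (∑ j, w j ^ 2) + β * (∑ j, |w j|)
        + 1 / (2 * α) * (∑ j, softThresh β ((1 / (n : ℝ)) * ∑ i, θ i * xb i j) ^ 2)
        - ∑ j, ((1 / (n : ℝ)) * ∑ i, θ i * xb i j) * w j := by
    rw [Finset.sum_sub_distrib, Finset.sum_add_distrib, Finset.sum_add_distrib,
      Finset.mul_sum, Finset.mul_sum, Finset.mul_sum]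
  rw [e1, e2, swap]
  unfold Pobj Dobj
  ring

theorem kkt_sufficient {n p : ℕ} (hn : 0 < n) (hp : 0 < p)
    (xb : Fin n → Fin p → ℝ) (γ : ℝ) (hγ0 : 0 < γ) (hγ1 : γ < 1)
    (α β : ℝ) (hα : 0 < α) (hβ : 0 < β)
    (w : Fin p → ℝ) (θ : Fin n → ℝ)
    (hθbox : ∀ i, 0 ≤ θ i ∧ θ i ≤ 1)
    (hkkt1 : ∀ j, w j = (1 / α) * softThresh β ((1 / (n : ℝ)) * ∑ i, θ i * xb i j))
    (hkkt2 : ∀ i, (1 - ∑ j, xb i j * w j < 0 → θ i = 0) ∧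
      (1 - ∑ j, xb i j * w j > γ → θ i = 1) ∧
      (0 ≤ 1 - ∑ j, xb i j * w j → 1 - ∑ j, xb i j * w j ≤ γ →
        θ i = (1 / γ) * (1 - ∑ j, xb i j * w j))) :
    (∀ w', Pobj xb γ α β w ≤ Pobj xb γ α β w') ∧
    (∀ θ' : Fin n → ℝ, (∀ i, 0 ≤ θ' i ∧ θ' i ≤ 1) →
      Dobj xb γ α β θ ≤ Dobj xb γ α β θ') := by
  have hn' : (0:ℝ) ≤ 1 / (n : ℝ) := by positivity
  -- the gap is nonnegative for any primal/dual feasible pair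
  have ge0 : ∀ (w' : Fin p → ℝ) (θ' : Fin n → ℝ), (∀ i, 0 ≤ θ' i ∧ θ' i ≤ 1) →
      0 ≤ Pobj xb γ α β w' + Dobj xb γ α β θ' := by
    intro w' θ' hbox
    rw [gap_eq]
    apply add_nonneg
    · apply mul_nonneg hn'
      apply Finset.sum_nonneg
      intro i _
      have := fy_loss γ (1 - ∑ j, xb i j * w' j) (θ' i) hγ0 (hbox i).1 (hbox i).2
      linarith
    · apply Finset.sum_nonneg
      intro j _
      have := fy_reg α β ((1 / (n : ℝ)) * ∑ i, θ' i * xb i j) (w' j) hα hβ.le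
      linarith
  -- the gap is zero at the KKT point
  have eq0 : Pobj xb γ α β w + Dobj xb γ α β θ = 0 := by
    rw [gap_eq]
    have s1 : ∑ i, (ell γ (1 - ∑ j, xb i j * w j) + γ * θ i ^ 2 / 2
        - θ i * (1 - ∑ j, xb i j * w j)) = 0 := by
      apply Finset.sum_eq_zero
      intro i _
      exact fy_loss_eq γ _ (θ i) hγ0 (hkkt2 i).1 (hkkt2 i).2.1 (hkkt2 i).2.2
    have s2 : ∑ j, (α / 2 * w j ^ 2 + β * |w j|
        + 1 / (2 * α) * softThresh β ((1 / (n : ℝ)) * ∑ i, θ i * xb i j) ^ 2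
        - ((1 / (n : ℝ)) * ∑ i, θ i * xb i j) * w j) = 0 := by
      apply Finset.sum_eq_zero
      intro j _
      have := fy_reg_eq α β ((1 / (n : ℝ)) * ∑ i, θ i * xb i j) (w j) hα hβ.le (hkkt1 j)
      linarith
    rw [s1, s2]; ring
  constructor
  · intro w'
    have := ge0 w' θ hθbox
    linarith
  · intro θ' hbox
    have := ge0 w θ' hbox
    linarith
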